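/- Let R₁ = I₁ × J₁ and R₂ = I₂ × J₂ be dyadic rectangles with I₁ ∩ I₂ = ∅ and J₁ ∩ J₂ = ∅. Then any dyadic rectangle R containing a point of R₁ and a point of R₂ must contain both R₁ and R₂. Consequently dist_H(p₁, p₂) = dist_H(q₁, q₂) for all p₁, q₁ ∈ R₁ and p₂, q₂ ∈ R₂. -/

import Mathlib

/- Two dyadic intervals that meet are nested: the points of `[k·2^n, (k+1)·2^n)` are exactly
those with `⌊x / 2^n⌋ = k`, and for `n ≤ n'` the index `⌊x / 2^n'⌋` is obtained from
`⌊x / 2^n⌋` by integer division by `2^(n' - n)`. So a dyadic interval meeting both of two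
disjoint dyadic intervals must be the larger one in each comparison, i.e. contain both; applying
this to both coordinates shows that every dyadic rectangle containing a point of `R₁` and a point
of `R₂` contains all of `R₁ ∪ R₂`, so the sets of rectangles defining the two infima coincide. -/

open MeasureTheory
open scoped ENNReal

/-- A dyadic interval `[k·2^n, (k+1)·2^n)`. -/
def IsDyadicInterval (I : Set ℝ) : Prop :=
  ∃ k n : ℤ, I = Set.Ico ((k : ℝ) * 2 ^ n) (((k : ℝ) + 1) * 2 ^ n)

/-- An axis-parallel dyadic rectangle in the plane. -/
def IsDyadicRect (R : Set (ℝ × ℝ)) : Prop :=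
  ∃ I J : Set ℝ, IsDyadicInterval I ∧ IsDyadicInterval J ∧ R = I ×ˢ J

/-- `dist_H(p,q) = inf { |R|^{1/2} : R dyadic rectangle containing p and q }`. -/
noncomputable def distH (p q : ℝ × ℝ) : ℝ≥0∞ :=
  sInf {v | ∃ R : Set (ℝ × ℝ), IsDyadicRect R ∧ p ∈ R ∧ q ∈ R ∧ v = volume R ^ (1 / 2 : ℝ)}

def dyadicIco (k n : ℤ) : Set ℝ :=
  Set.Ico ((k : ℝ) * 2 ^ n) (((k : ℝ) + 1) * 2 ^ n)

theorem mem_dyadicIco_iff {x : ℝ} {k n : ℤ} : x ∈ dyadicIco k n ↔ ⌊x / 2 ^ n⌋ = k := by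
  have h2n : (0 : ℝ) < 2 ^ n := by positivity
  rw [Int.floor_eq_iff, le_div_iff₀ h2n, div_lt_iff₀ h2n]
  rfl

theorem floor_div_two_zpow_of_le {n n' : ℤ} (h : n ≤ n') (x : ℝ) :
    ⌊x / 2 ^ n'⌋ = ⌊x / 2 ^ n⌋ / 2 ^ (n' - n).toNat := by
  have hpow : (2 : ℝ) ^ n' = 2 ^ n * ((2 ^ (n' - n).toNat : ℕ) : ℝ) := by
    rw [Nat.cast_pow, Nat.cast_ofNat, ← zpow_natCast, Int.toNat_of_nonneg (by omega),
      ← zpow_add₀ two_ne_zero, add_sub_cancel]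
  rw [hpow, ← div_div, Int.floor_div_natCast, Nat.cast_pow, Nat.cast_ofNat]

theorem dyadicIco_subset_of_le {k n k' n' : ℤ} (h : n ≤ n')
    (hmeet : (dyadicIco k n ∩ dyadicIco k' n').Nonempty) : dyadicIco k n ⊆ dyadicIco k' n' := by
  obtain ⟨x, hx, hx'⟩ := hmeet
  intro z hz
  rw [mem_dyadicIco_iff] at hx hx' hz ⊢
  rw [floor_div_two_zpow_of_le h, hz, ← hx', floor_div_two_zpow_of_le h, hx]

theorem IsDyadicInterval.subset_or_superset {I I' : Set ℝ} (hI : IsDyadicInterval I)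
    (hI' : IsDyadicInterval I') (hmeet : (I ∩ I').Nonempty) : I ⊆ I' ∨ I' ⊆ I := by
  obtain ⟨k, n, rfl⟩ := hI
  obtain ⟨k', n', rfl⟩ := hI'
  rcases le_total n n' with h | h
  · exact .inl (dyadicIco_subset_of_le h hmeet)
  · exact .inr (dyadicIco_subset_of_le h (Set.inter_comm _ _ ▸ hmeet))

theorem IsDyadicInterval.superset_of_meets_disjoint {K I : Set ℝ} (hK : IsDyadicInterval K)
    (hI : IsDyadicInterval I) {I' : Set ℝ} (hdisj : Disjoint I I')
    (hmeet : (K ∩ I).Nonempty) (hmeet' : (K ∩ I').Nonempty) : I ⊆ K := by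
  refine (hK.subset_or_superset hI hmeet).resolve_left fun hKI => ?_
  obtain ⟨x, hxK, hxI'⟩ := hmeet'
  exact hdisj.notMem_of_mem_left (hKI hxK) hxI'

theorem IsDyadicRect.superset_of_meets {R : Set (ℝ × ℝ)} (hR : IsDyadicRect R)
    {I₁ J₁ I₂ J₂ : Set ℝ} (hI₁ : IsDyadicInterval I₁) (hJ₁ : IsDyadicInterval J₁)
    (hI₂ : IsDyadicInterval I₂) (hJ₂ : IsDyadicInterval J₂)
    (hI : Disjoint I₁ I₂) (hJ : Disjoint J₁ J₂)
    (hmeet₁ : (R ∩ I₁ ×ˢ J₁).Nonempty) (hmeet₂ : (R ∩ I₂ ×ˢ J₂).Nonempty) :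
    I₁ ×ˢ J₁ ⊆ R ∧ I₂ ×ˢ J₂ ⊆ R := by
  obtain ⟨I, J, hDI, hDJ, rfl⟩ := hR
  obtain ⟨⟨x₁, y₁⟩, ⟨hx₁, hy₁⟩, hx₁', hy₁'⟩ := hmeet₁
  obtain ⟨⟨x₂, y₂⟩, ⟨hx₂, hy₂⟩, hx₂', hy₂'⟩ := hmeet₂
  exact ⟨Set.prod_mono
      (hDI.superset_of_meets_disjoint hI₁ hI ⟨x₁, hx₁, hx₁'⟩ ⟨x₂, hx₂, hx₂'⟩)
      (hDJ.superset_of_meets_disjoint hJ₁ hJ ⟨y₁, hy₁, hy₁'⟩ ⟨y₂, hy₂, hy₂'⟩),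
    Set.prod_mono
      (hDI.superset_of_meets_disjoint hI₂ hI.symm ⟨x₂, hx₂, hx₂'⟩ ⟨x₁, hx₁, hx₁'⟩)
      (hDJ.superset_of_meets_disjoint hJ₂ hJ.symm ⟨y₂, hy₂, hy₂'⟩ ⟨y₁, hy₁, hy₁'⟩)⟩

theorem distH_le_of_forall_isDyadicRect {p q p' q' : ℝ × ℝ}
    (h : ∀ R, IsDyadicRect R → p ∈ R → q ∈ R → p' ∈ R ∧ q' ∈ R) : distH p' q' ≤ distH p q :=
  sInf_le_sInf fun _ ⟨R, hR, hp, hq, hv⟩ => ⟨R, hR, (h R hR hp hq).1, (h R hR hp hq).2, hv⟩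

/-- If `R₁ = I₁ × J₁`, `R₂ = I₂ × J₂` are dyadic rectangles with disjoint component
intervals, then any dyadic rectangle meeting both must contain both, and consequently
`dist_H(p₁,p₂) = dist_H(q₁,q₂)` for all `p₁, q₁ ∈ R₁`, `p₂, q₂ ∈ R₂`. -/
theorem stmt2 (I₁ J₁ I₂ J₂ : Set ℝ)
    (hI₁ : IsDyadicInterval I₁) (hJ₁ : IsDyadicInterval J₁)
    (hI₂ : IsDyadicInterval I₂) (hJ₂ : IsDyadicInterval J₂)
    (hI : I₁ ∩ I₂ = ∅) (hJ : J₁ ∩ J₂ = ∅) :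
    (∀ R : Set (ℝ × ℝ), IsDyadicRect R →
        (R ∩ I₁ ×ˢ J₁).Nonempty → (R ∩ I₂ ×ˢ J₂).Nonempty →
        I₁ ×ˢ J₁ ⊆ R ∧ I₂ ×ˢ J₂ ⊆ R) ∧
    (∀ p₁ ∈ I₁ ×ˢ J₁, ∀ q₁ ∈ I₁ ×ˢ J₁, ∀ p₂ ∈ I₂ ×ˢ J₂, ∀ q₂ ∈ I₂ ×ˢ J₂,
        distH p₁ p₂ = distH q₁ q₂) := by
  have contains : ∀ R : Set (ℝ × ℝ), IsDyadicRect R →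
      (R ∩ I₁ ×ˢ J₁).Nonempty → (R ∩ I₂ ×ˢ J₂).Nonempty → I₁ ×ˢ J₁ ⊆ R ∧ I₂ ×ˢ J₂ ⊆ R :=
    fun R hR => hR.superset_of_meets hI₁ hJ₁ hI₂ hJ₂
      (Set.disjoint_iff_inter_eq_empty.mpr hI) (Set.disjoint_iff_inter_eq_empty.mpr hJ)
  have transfer : ∀ a ∈ I₁ ×ˢ J₁, ∀ b ∈ I₁ ×ˢ J₁, ∀ c ∈ I₂ ×ˢ J₂, ∀ d ∈ I₂ ×ˢ J₂,
      distH b d ≤ distH a c := fun a ha b hb c hc d hd =>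
    distH_le_of_forall_isDyadicRect fun R hR haR hcR =>
      have hsub := contains R hR ⟨a, haR, ha⟩ ⟨c, hcR, hc⟩
      ⟨hsub.1 hb, hsub.2 hd⟩
  exact ⟨contains, fun p₁ hp₁ q₁ hq₁ p₂ hp₂ q₂ hq₂ =>
    le_antisymm (transfer q₁ hq₁ p₁ hp₁ q₂ hq₂ p₂ hp₂) (transfer p₁ hp₁ q₁ hq₁ p₂ hp₂ q₂ hq₂)⟩
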